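/- arXiv:1710.09332 — 4 statements merged into one kernel-verified Lean document; each statement's English description precedes it below -/
import Mathlib

section
/- Let λ > 0, a > 0, c₀, c₁ ∈ ℝ, and let f : [0,a] → ℝ be continuous. Define u : [0,a] → ℝ by u(x) = cosh(√λ x)·c₀ + (sinh(√λ x)/√λ)·c₁ + ∫₀ˣ (sinh(√λ (x−ξ))/√λ)·f(ξ) dξ. Then for every x ∈ [0,a], u(x) + u'(x)/√λ = e^{√λ x}·( c₀ + c₁/√λ + ∫₀ˣ (e^{−√λ ξ}/√λ)·f(ξ) dξ ). -/
/-! With `s = √λ`, the identity is `cosh + sinh = exp`, applied both to the free part of `u` and,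
under the integral, to the Duhamel kernel `sinh (s (x - ξ)) / s` and its `x`-derivative
`cosh (s (x - ξ))`. The derivative of the Duhamel integral is computed by separating variables
with the addition formula for `sinh`, which reduces it to the fundamental theorem of calculus.
Since `f` is only continuous on `[0, a]`, it is first replaced by a continuous extension, which
changes neither `u` nor the integrals on `[0, a]`. -/

open MeasureTheory Set Real

theorem ContinuousOn.exists_continuous_eqOn_Icc {f : ℝ → ℝ} {a b : ℝ} (hab : a ≤ b)
    (hf : ContinuousOn f (Icc a b)) : ∃ g : ℝ → ℝ, Continuous g ∧ EqOn g f (Icc a b) :=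
  ⟨IccExtend hab ((Icc a b).domRestrict f), hf.domRestrict.Icc_extend',
    fun _ hx => IccExtend_of_mem hab _ hx⟩

theorem integral_mul_congr_of_eqOn_Icc {f g : ℝ → ℝ} {a b x : ℝ} (hfg : EqOn f g (Icc a b))
    (hx : x ∈ Icc a b) (k : ℝ → ℝ) :
    ∫ ξ in a..x, k ξ * f ξ = ∫ ξ in a..x, k ξ * g ξ := by
  refine intervalIntegral.integral_congr fun ξ hξ => ?_
  rw [uIcc_of_le hx.1] at hξ
  simp only [hfg ⟨hξ.1, hξ.2.trans hx.2⟩]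

section Duhamel

variable {g : ℝ → ℝ}

theorem integral_sinh_mul_sub_mul (hg : Continuous g) (s x : ℝ) :
    ∫ ξ in (0:ℝ)..x, sinh (s * (x - ξ)) * g ξ =
      sinh (s * x) * (∫ ξ in (0:ℝ)..x, cosh (s * ξ) * g ξ) -
        cosh (s * x) * ∫ ξ in (0:ℝ)..x, sinh (s * ξ) * g ξ := by
  rw [← intervalIntegral.integral_const_mul, ← intervalIntegral.integral_const_mul,
    ← intervalIntegral.integral_sub]
  · congr 1 with ξ
    rw [mul_sub, sinh_sub]
    ring
  all_goals exact (by fun_prop : Continuous _).intervalIntegrable _ _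

theorem integral_cosh_mul_sub_mul (hg : Continuous g) (s x : ℝ) :
    ∫ ξ in (0:ℝ)..x, cosh (s * (x - ξ)) * g ξ =
      cosh (s * x) * (∫ ξ in (0:ℝ)..x, cosh (s * ξ) * g ξ) -
        sinh (s * x) * ∫ ξ in (0:ℝ)..x, sinh (s * ξ) * g ξ := by
  rw [← intervalIntegral.integral_const_mul, ← intervalIntegral.integral_const_mul,
    ← intervalIntegral.integral_sub]
  · congr 1 with ξ
    rw [mul_sub, cosh_sub]
    ring
  all_goals exact (by fun_prop : Continuous _).intervalIntegrable _ _

theorem hasDerivAt_integral_sinh_mul_sub_mul (hg : Continuous g) (s x : ℝ) :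
    HasDerivAt (fun x => ∫ ξ in (0:ℝ)..x, sinh (s * (x - ξ)) * g ξ)
      (s * ∫ ξ in (0:ℝ)..x, cosh (s * (x - ξ)) * g ξ) x := by
  have hlin : HasDerivAt (fun x => s * x) s x := by simpa using (hasDerivAt_id x).const_mul s
  have hFTC (k : ℝ → ℝ) (hk : Continuous k) :
      HasDerivAt (fun x => ∫ ξ in (0:ℝ)..x, k (s * ξ) * g ξ) (k (s * x) * g x) x :=
    ((by fun_prop : Continuous fun ξ => k (s * ξ) * g ξ).integral_hasStrictDerivAt
      0 x).hasDerivAt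
  simp_rw [integral_sinh_mul_sub_mul hg, integral_cosh_mul_sub_mul hg]
  refine ((hlin.sinh.mul (hFTC cosh continuous_cosh)).sub
    (hlin.cosh.mul (hFTC sinh continuous_sinh))).congr_deriv ?_
  ring

end Duhamel

noncomputable def modeSolution (s c₀ c₁ : ℝ) (g : ℝ → ℝ) (x : ℝ) : ℝ :=
  cosh (s * x) * c₀ + sinh (s * x) / s * c₁ +
    ∫ ξ in (0:ℝ)..x, sinh (s * (x - ξ)) / s * g ξ

section ModeSolution

variable {s : ℝ} (c₀ c₁ : ℝ) {g : ℝ → ℝ}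

theorem hasDerivAt_modeSolution (hs : s ≠ 0) (hg : Continuous g) (x : ℝ) :
    HasDerivAt (modeSolution s c₀ c₁ g)
      (s * sinh (s * x) * c₀ + cosh (s * x) * c₁ +
        ∫ ξ in (0:ℝ)..x, cosh (s * (x - ξ)) * g ξ) x := by
  have hlin : HasDerivAt (fun x => s * x) s x := by simpa using (hasDerivAt_id x).const_mul s
  have hDuhamel : HasDerivAt (fun x => ∫ ξ in (0:ℝ)..x, sinh (s * (x - ξ)) / s * g ξ)
      ((s * ∫ ξ in (0:ℝ)..x, cosh (s * (x - ξ)) * g ξ) / s) x := by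
    simp_rw [div_mul_eq_mul_div, intervalIntegral.integral_div]
    exact (hasDerivAt_integral_sinh_mul_sub_mul hg s x).div_const s
  refine (((hlin.cosh.mul_const c₀).add ((hlin.sinh.div_const s).mul_const c₁)).add
    hDuhamel).congr_deriv ?_
  field_simp

theorem modeSolution_add_deriv_div (hs : s ≠ 0) (hg : Continuous g) (x : ℝ) :
    modeSolution s c₀ c₁ g x + deriv (modeSolution s c₀ c₁ g) x / s =
      exp (s * x) * (c₀ + c₁ / s + ∫ ξ in (0:ℝ)..x, exp (-s * ξ) / s * g ξ) := by
  have hDuhamel : (∫ ξ in (0:ℝ)..x, sinh (s * (x - ξ)) / s * g ξ) +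
      (∫ ξ in (0:ℝ)..x, cosh (s * (x - ξ)) * g ξ) / s =
        exp (s * x) * ∫ ξ in (0:ℝ)..x, exp (-s * ξ) / s * g ξ := by
    rw [← intervalIntegral.integral_div, ← intervalIntegral.integral_add,
      ← intervalIntegral.integral_const_mul]
    · refine intervalIntegral.integral_congr fun ξ _ => ?_
      have hexp : sinh (s * (x - ξ)) + cosh (s * (x - ξ)) = exp (s * x) * exp (-s * ξ) := by
        rw [sinh_add_cosh, ← exp_add]
        ring_nf
      linear_combination g ξ / s * hexp
    all_goals exact (by fun_prop : Continuous _).intervalIntegrable _ _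
  rw [(hasDerivAt_modeSolution c₀ c₁ hs hg x).deriv, modeSolution, mul_add,
    ← hDuhamel, ← cosh_add_sinh]
  field_simp
  ring

end ModeSolution

/-- Exponential identity (2.2) for a single Fourier mode of the mild solution. -/
theorem stmt_1 (lam a : ℝ) (hlam : 0 < lam) (ha : 0 < a) (c₀ c₁ : ℝ)
    (f : ℝ → ℝ) (hf : ContinuousOn f (Icc 0 a))
    (u u' : ℝ → ℝ)
    (hu : ∀ x, u x =
      Real.cosh (Real.sqrt lam * x) * c₀ +
      Real.sinh (Real.sqrt lam * x) / Real.sqrt lam * c₁ +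
      ∫ ξ in (0:ℝ)..x, Real.sinh (Real.sqrt lam * (x - ξ)) / Real.sqrt lam * f ξ)
    (hu' : ∀ x ∈ Icc (0:ℝ) a, HasDerivWithinAt u (u' x) (Icc 0 a) x) :
    ∀ x ∈ Icc (0:ℝ) a,
      u x + u' x / Real.sqrt lam =
      Real.exp (Real.sqrt lam * x) *
        (c₀ + c₁ / Real.sqrt lam +
         ∫ ξ in (0:ℝ)..x, Real.exp (-(Real.sqrt lam) * ξ) / Real.sqrt lam * f ξ) := by
  intro x hx
  have hs : √lam ≠ 0 := (Real.sqrt_pos.2 hlam).ne'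
  obtain ⟨g, hg, hgf⟩ := hf.exists_continuous_eqOn_Icc ha.le
  have hug : EqOn u (modeSolution √lam c₀ c₁ g) (Icc 0 a) := fun y hy => by
    rw [hu y, modeSolution, integral_mul_congr_of_eqOn_Icc hgf.symm hy]
  have hmode := hasDerivAt_modeSolution c₀ c₁ hs hg x
  have hu'g : u' x = deriv (modeSolution √lam c₀ c₁ g) x := by
    rw [hmode.deriv]
    exact (uniqueDiffOn_Icc ha x hx).eq_deriv _ (hu' x hx)
      (hmode.hasDerivWithinAt.congr_of_mem hug hx)
  rw [hug hx, hu'g, modeSolution_add_deriv_div c₀ c₁ hs hg,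
    integral_mul_congr_of_eqOn_Icc hgf hx]
end

section
/- Let λ > 0, a > 0, c₀, c₁ ∈ ℝ, and let f : [0,a] → ℝ be continuous. Define u : [0,a] → ℝ by u(x) = cosh(√λ x)·c₀ + (sinh(√λ x)/√λ)·c₁ + ∫₀ˣ (sinh(√λ (x−ξ))/√λ)·f(ξ) dξ. Then for every x ∈ [0,a], e^{√λ (a−x)}·( u(x) + u'(x)/√λ ) = u(a) + u'(a)/√λ − ∫ₓᵃ (e^{√λ (a−ξ)}/√λ)·f(ξ) dξ. -/
/-!
Write `s = √λ`. Variation of constants splits the mild solution into a growing and a decaying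
mode, `u x = (e^{s x} A_s(x) + e^{-s x} A_{-s}(x)) / 2`, with amplitudes
`A_s(x) = c₀ + c₁/s + (1/s) ∫₀ˣ e^{-s ξ} f(ξ) dξ`. The amplitude derivatives cancel in `u'`, so
`u' = s (e^{s x} A_s - e^{-s x} A_{-s}) / 2` and hence `u + u'/s = e^{s x} A_s(x)`. The identity
is then `A_s(a) - A_s(x) = (1/s) ∫ₓᵃ e^{-s ξ} f(ξ) dξ`, multiplied by `e^{s a}`.
-/

open MeasureTheory Set Real

theorem ContinuousOn.intervalIntegrable_of_mem_Icc {E : Type*} [NormedAddCommGroup E]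
    {g : ℝ → E} {b c y : ℝ} (hg : ContinuousOn g (Icc b c)) (hy : y ∈ Icc b c) :
    IntervalIntegrable g volume b y :=
  (hg.mono (Icc_subset_Icc_right hy.2)).intervalIntegrable_of_Icc hy.1

theorem hasDerivWithinAt_integral_Icc {E : Type*} [NormedAddCommGroup E] [NormedSpace ℝ E]
    [CompleteSpace E] {g : ℝ → E} {b c y : ℝ} (hg : ContinuousOn g (Icc b c))
    (hy : y ∈ Icc b c) :
    HasDerivWithinAt (fun x => ∫ ξ in b..x, g ξ) (g y) (Icc b c) y := by
  have : Fact (y ∈ Icc b c) := ⟨hy⟩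
  exact intervalIntegral.integral_hasDerivWithinAt_right
    (hg.intervalIntegrable_of_mem_Icc hy)
    (hg.stronglyMeasurableAtFilter_nhdsWithin measurableSet_Icc y) (hg y hy)

noncomputable def mildMode (s c₀ c₁ : ℝ) (f : ℝ → ℝ) (x : ℝ) : ℝ :=
  cosh (s * x) * c₀ + sinh (s * x) / s * c₁ + ∫ ξ in (0:ℝ)..x, sinh (s * (x - ξ)) / s * f ξ

noncomputable def modeAmplitude (s c₀ c₁ : ℝ) (f : ℝ → ℝ) (x : ℝ) : ℝ :=
  c₀ + c₁ / s + (∫ ξ in (0:ℝ)..x, exp (-(s * ξ)) * f ξ) / s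

section

variable {s c₀ c₁ a x y : ℝ} {f : ℝ → ℝ}

theorem mildMode_eq_modeAmplitude (hs : s ≠ 0) (hf : IntervalIntegrable f volume 0 x) :
    mildMode s c₀ c₁ f x = (exp (s * x) * modeAmplitude s c₀ c₁ f x
      + exp (-s * x) * modeAmplitude (-s) c₀ c₁ f x) / 2 := by
  have hint : ∀ t : ℝ, IntervalIntegrable (fun ξ => exp (t * ξ) * f ξ) volume 0 x := fun t =>
    hf.continuousOn_mul (by fun_prop)
  have hkernel : (∫ ξ in (0:ℝ)..x, sinh (s * (x - ξ)) / s * f ξ) =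
      ∫ ξ in (0:ℝ)..x, (exp (s * x) / (2 * s) * (exp (-s * ξ) * f ξ)
        - exp (-s * x) / (2 * s) * (exp (s * ξ) * f ξ)) := by
    refine intervalIntegral.integral_congr fun ξ _ => ?_
    rw [sinh_eq, show s * (x - ξ) = s * x + -s * ξ by ring,
      show -(s * x + -s * ξ) = -s * x + s * ξ by ring, exp_add, exp_add]
    ring
  rw [mildMode, modeAmplitude, modeAmplitude, hkernel,
    intervalIntegral.integral_sub ((hint _).const_mul _) ((hint _).const_mul _),
    intervalIntegral.integral_const_mul, intervalIntegral.integral_const_mul, cosh_eq, sinh_eq]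
  simp only [neg_mul, neg_neg]
  field_simp
  ring

theorem hasDerivWithinAt_exp_mul_modeAmplitude (hf : ContinuousOn f (Icc 0 a))
    (hy : y ∈ Icc 0 a) :
    HasDerivWithinAt (fun x => exp (s * x) * modeAmplitude s c₀ c₁ f x)
      (s * (exp (s * y) * modeAmplitude s c₀ c₁ f y) + f y / s) (Icc 0 a) y := by
  have hexp : HasDerivWithinAt (fun x => exp (s * x)) (exp (s * y) * s) (Icc 0 a) y := by
    simpa using (((hasDerivAt_id y).const_mul s).exp).hasDerivWithinAt
  have hamp : HasDerivWithinAt (modeAmplitude s c₀ c₁ f) (exp (-(s * y)) * f y / s) (Icc 0 a) y :=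
    ((hasDerivWithinAt_integral_Icc (.mul (by fun_prop) hf) hy).div_const
      s).const_add (c₀ + c₁ / s)
  refine (hexp.mul hamp).congr_deriv ?_
  rw [exp_neg]
  field_simp

theorem hasDerivWithinAt_mildMode (hs : s ≠ 0) (hf : ContinuousOn f (Icc 0 a))
    (hy : y ∈ Icc 0 a) :
    HasDerivWithinAt (mildMode s c₀ c₁ f) (s * (exp (s * y) * modeAmplitude s c₀ c₁ f y
      - exp (-s * y) * modeAmplitude (-s) c₀ c₁ f y) / 2) (Icc 0 a) y := by
  have hsum := ((hasDerivWithinAt_exp_mul_modeAmplitude (s := s) (c₀ := c₀) (c₁ := c₁) hf hy).add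
    (hasDerivWithinAt_exp_mul_modeAmplitude (s := -s) (c₀ := c₀) (c₁ := c₁) hf hy)).div_const 2
  refine (hsum.congr_of_mem (fun x hx => ?_) hy).congr_deriv ?_
  · exact mildMode_eq_modeAmplitude hs (hf.intervalIntegrable_of_mem_Icc hx)
  · rw [div_neg]
    ring

theorem mildMode_add_deriv_div (hs : s ≠ 0) (ha : 0 < a) (hf : ContinuousOn f (Icc 0 a))
    (hy : y ∈ Icc 0 a) {u'y : ℝ} (hu' : HasDerivWithinAt (mildMode s c₀ c₁ f) u'y (Icc 0 a) y) :
    mildMode s c₀ c₁ f y + u'y / s = exp (s * y) * modeAmplitude s c₀ c₁ f y := by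
  rw [(uniqueDiffOn_Icc ha y hy).eq_deriv _ hu' (hasDerivWithinAt_mildMode hs hf hy),
    mildMode_eq_modeAmplitude hs (hf.intervalIntegrable_of_mem_Icc hy)]
  field_simp
  ring

theorem integral_exp_mul_eq_modeAmplitude_sub (hfx : IntervalIntegrable f volume 0 x)
    (hfa : IntervalIntegrable f volume 0 a) :
    ∫ ξ in x..a, exp (s * (a - ξ)) / s * f ξ
      = exp (s * a) * (modeAmplitude s c₀ c₁ f a - modeAmplitude s c₀ c₁ f x) := by
  calc ∫ ξ in x..a, exp (s * (a - ξ)) / s * f ξ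
      = ∫ ξ in x..a, exp (s * a) / s * (exp (-(s * ξ)) * f ξ) :=
        intervalIntegral.integral_congr fun ξ _ => by
          rw [mul_sub, sub_eq_add_neg, exp_add]
          ring
    _ = exp (s * a) / s * ((∫ ξ in (0:ℝ)..a, exp (-(s * ξ)) * f ξ)
          - ∫ ξ in (0:ℝ)..x, exp (-(s * ξ)) * f ξ) := by
        rw [intervalIntegral.integral_const_mul, intervalIntegral.integral_interval_sub_left
          (hfa.continuousOn_mul (by fun_prop)) (hfx.continuousOn_mul (by fun_prop))]
    _ = exp (s * a) * (modeAmplitude s c₀ c₁ f a - modeAmplitude s c₀ c₁ f x) := by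
        simp only [modeAmplitude]
        ring

end

/-- Backward identity expressing a Fourier mode at an interior point `x`
through its values at the endpoint `x = a`. -/
theorem stmt_2 (lam a : ℝ) (hlam : 0 < lam) (ha : 0 < a) (c₀ c₁ : ℝ)
    (f : ℝ → ℝ) (hf : ContinuousOn f (Icc 0 a))
    (u u' : ℝ → ℝ)
    (hu : ∀ x, u x =
      Real.cosh (Real.sqrt lam * x) * c₀ +
      Real.sinh (Real.sqrt lam * x) / Real.sqrt lam * c₁ +
      ∫ ξ in (0:ℝ)..x, Real.sinh (Real.sqrt lam * (x - ξ)) / Real.sqrt lam * f ξ)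
    (hu' : ∀ x ∈ Icc (0:ℝ) a, HasDerivWithinAt u (u' x) (Icc 0 a) x) :
    ∀ x ∈ Icc (0:ℝ) a,
      Real.exp (Real.sqrt lam * (a - x)) * (u x + u' x / Real.sqrt lam) =
      u a + u' a / Real.sqrt lam -
        ∫ ξ in x..a, Real.exp (Real.sqrt lam * (a - ξ)) / Real.sqrt lam * f ξ := by
  intro x hx
  set s := √lam
  have hs : s ≠ 0 := (sqrt_pos.2 hlam).ne'
  obtain rfl : u = mildMode s c₀ c₁ f := funext hu
  have hax : a ∈ Icc 0 a := right_mem_Icc.2 ha.le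
  have hshift : exp (s * (a - x)) * exp (s * x) = exp (s * a) := by
    rw [← exp_add]
    ring_nf
  rw [mildMode_add_deriv_div hs ha hf hx (hu' x hx), mildMode_add_deriv_div hs ha hf hax (hu' a hax),
    integral_exp_mul_eq_modeAmplitude_sub (c₀ := c₀) (c₁ := c₁)
      (hf.intervalIntegrable_of_mem_Icc hx) (hf.intervalIntegrable_of_mem_Icc hax)]
  linear_combination modeAmplitude s c₀ c₁ f x * hshift
end

section
/- Let a > 0, k = 1, (λ_p)_{p≥1} a sequence of positive reals with λ_p ≥ λ₁ > 0 for all p, (c₀ₚ), (c₁ₚ) real sequences, and for each p let f_p : [0,a] → ℝ be continuous. Define u_p : [0,a] → ℝ by u_p(x) = cosh(√λ_p x)·c₀ₚ + (sinh(√λ_p x)/√λ_p)·c₁ₚ + ∫₀ˣ (sinh(√λ_p (x−ξ))/√λ_p)·f_p(ξ) dξ. Then for every x ∈ [0,a], Σ_{p=1}^∞ λ_p·e^{2√λ_p (a−x)}·( u_p(x) + u_p'(x)/√λ_p )² ≤ 3·Σ_{p=1}^∞ (1+λ_p)·u_p(a)² + 3·Σ_{p=1}^∞ u_p'(a)² +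 (3/2)·λ₁^{−1/2}·∫₀ᵃ Σ_{p=1}^∞ e^{2√λ_p a}·f_p(ξ)² dξ, where the sums of nonnegative terms are interpreted in [0,∞]. -/
/-!
Write `μ = √λ_p`. The combination `w = μ u_p + u_p'` of the mild solution and its derivative is
`w(y) = e^{μy} (μ c₀ₚ + c₁ₚ + ∫₀^y e^{-μξ} f_p(ξ) dξ)`, so that
`e^{μ(a-x)} w(x) = w(a) - e^{μa} ∫ₓᵃ e^{-μξ} f_p(ξ) dξ`.
The left-hand side of the bound is the square of this quantity; `(p + q - r)² ≤ 3(p² + q² + r²)`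
splits it, and Cauchy–Schwarz against `∫₀^∞ e^{-2μξ} dξ = 1/(2μ) ≤ 1/(2√λ₁)` controls the
integral term. Summing over `p` in `[0, ∞]` gives the claim.
-/

open MeasureTheory Set Real
open scoped ENNReal

theorem sq_integral_mul_le {α : Type*} [MeasurableSpace α] {ν : Measure α} {g h : α → ℝ}
    (hg : MemLp g 2 ν) (hh : MemLp h 2 ν) :
    (∫ t, g t * h t ∂ν) ^ 2 ≤ (∫ t, g t ^ 2 ∂ν) * ∫ t, h t ^ 2 ∂ν := by
  have hpow : ∀ φ : α → ℝ, ∫ t, ‖φ t‖ ^ (2 : ℝ) ∂ν = ∫ t, φ t ^ 2 ∂ν := fun φ => by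
    simp only [rpow_two, norm_eq_abs, sq_abs]
  have holder := integral_mul_norm_le_Lp_mul_Lq HolderConjugate.two_two
    (by simpa using hg) (by simpa using hh)
  rw [hpow, hpow] at holder
  have habs : |∫ t, g t * h t ∂ν| ≤ ∫ t, ‖g t‖ * ‖h t‖ ∂ν := by
    simpa only [norm_eq_abs, norm_mul] using norm_integral_le_integral_norm (fun t => g t * h t)
  have hg0 : 0 ≤ ∫ t, g t ^ 2 ∂ν := integral_nonneg fun t => sq_nonneg _
  have hh0 : 0 ≤ ∫ t, h t ^ 2 ∂ν := integral_nonneg fun t => sq_nonneg _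
  calc (∫ t, g t * h t ∂ν) ^ 2 = |∫ t, g t * h t ∂ν| ^ 2 := (sq_abs _).symm
    _ ≤ (√(∫ t, g t ^ 2 ∂ν) * √(∫ t, h t ^ 2 ∂ν)) ^ 2 := by
      gcongr
      simpa only [sqrt_eq_rpow, one_div] using habs.trans holder
    _ = _ := by rw [mul_pow, sq_sqrt hg0, sq_sqrt hh0]

theorem sq_setIntegral_exp_neg_mul_le {μ : ℝ} (hμ : 0 < μ) {s : Set ℝ} (hs : s ⊆ Ioi 0)
    {g : ℝ → ℝ} (hg : MemLp g 2 (volume.restrict s)) :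
    (∫ ξ in s, exp (-(μ * ξ)) * g ξ) ^ 2 ≤ (2 * μ)⁻¹ * ∫ ξ in s, g ξ ^ 2 := by
  have hsq : ∀ ξ, exp (-(μ * ξ)) ^ 2 = exp (-(2 * μ) * ξ) := fun ξ => by
    rw [← exp_nat_mul]; ring_nf
  have hint : IntegrableOn (fun ξ => exp (-(2 * μ) * ξ)) (Ioi 0) :=
    integrableOn_exp_mul_Ioi (by linarith) 0
  have hexp : MemLp (fun ξ => exp (-(μ * ξ))) 2 (volume.restrict s) := by
    refine (memLp_two_iff_integrable_sq (by fun_prop)).2 ?_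
    simp only [hsq]
    exact hint.mono_set hs
  calc _ ≤ (∫ ξ in s, exp (-(μ * ξ)) ^ 2) * ∫ ξ in s, g ξ ^ 2 := sq_integral_mul_le hexp hg
    _ ≤ (∫ ξ in Ioi 0, exp (-(2 * μ) * ξ)) * ∫ ξ in s, g ξ ^ 2 := by
      simp only [hsq]
      refine mul_le_mul_of_nonneg_right ?_ (integral_nonneg fun _ => sq_nonneg _)
      exact setIntegral_mono_set hint (Filter.Eventually.of_forall fun _ => (exp_pos _).le)
        hs.eventuallyLE
    _ = (2 * μ)⁻¹ * ∫ ξ in s, g ξ ^ 2 := by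
      rw [integral_exp_mul_Ioi (by linarith)]
      field_simp
      simp

theorem sq_intervalIntegral_exp_neg_mul_le {μ x a : ℝ} (hμ : 0 < μ) {F : ℝ → ℝ}
    (hF : Continuous F) (hx : x ∈ Icc 0 a) :
    (∫ ξ in x..a, exp (-(μ * ξ)) * F ξ) ^ 2 ≤ (2 * μ)⁻¹ * ∫ ξ in Icc 0 a, F ξ ^ 2 := by
  rw [intervalIntegral.integral_of_le hx.2]
  calc _ ≤ (2 * μ)⁻¹ * ∫ ξ in Ioc x a, F ξ ^ 2 :=
        sq_setIntegral_exp_neg_mul_le hμ (fun ξ hξ => hx.1.trans_lt hξ.1)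
          ((memLp_two_iff_integrable_sq hF.aestronglyMeasurable).2 (hF.pow 2).integrableOn_Ioc)
    _ ≤ _ := by
        refine mul_le_mul_of_nonneg_left ?_ (by positivity)
        exact setIntegral_mono_set (hF.pow 2).integrableOn_Icc
          (Filter.Eventually.of_forall fun _ => sq_nonneg _)
          (Ioc_subset_Icc_self.trans (Icc_subset_Icc_left hx.1)).eventuallyLE

/-- The mild solution of `u'' = μ² u + F`, `u(0) = c₀`, `u'(0) = c₁`. -/
noncomputable def mildSolution (μ c₀ c₁ : ℝ) (F : ℝ → ℝ) (y : ℝ) : ℝ :=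
  cosh (μ * y) * c₀ + sinh (μ * y) / μ * c₁ + ∫ ξ in (0:ℝ)..y, sinh (μ * (y - ξ)) / μ * F ξ

theorem mildSolution_eq_exp {μ : ℝ} (c₀ c₁ : ℝ) {F : ℝ → ℝ} (hF : Continuous F) (y : ℝ) :
    mildSolution μ c₀ c₁ F y =
      cosh (μ * y) * c₀ + sinh (μ * y) / μ * c₁ +
        (exp (μ * y) / (2 * μ) * ∫ ξ in (0:ℝ)..y, exp (-(μ * ξ)) * F ξ) -
        exp (-(μ * y)) / (2 * μ) * ∫ ξ in (0:ℝ)..y, exp (μ * ξ) * F ξ := by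
  rw [mildSolution, add_sub_assoc, ← intervalIntegral.integral_const_mul,
    ← intervalIntegral.integral_const_mul, ← intervalIntegral.integral_sub
      (by apply Continuous.intervalIntegrable; fun_prop)
      (by apply Continuous.intervalIntegrable; fun_prop)]
  congr 1
  refine intervalIntegral.integral_congr fun ξ _ => ?_
  simp only [sinh_eq, mul_sub, neg_sub, exp_sub, exp_neg]
  ring

theorem mildSolution_eqOn_of_eqOn {μ a c₀ c₁ : ℝ} {F G : ℝ → ℝ} (h : EqOn F G (Icc 0 a)) :
    EqOn (mildSolution μ c₀ c₁ F) (mildSolution μ c₀ c₁ G) (Icc 0 a) := by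
  intro y hy
  refine congrArg _ (intervalIntegral.integral_congr fun ξ hξ => ?_)
  rw [uIcc_of_le hy.1] at hξ
  simp only [h ⟨hξ.1, hξ.2.trans hy.2⟩]

theorem hasDerivAt_mildSolution {μ : ℝ} (hμ : μ ≠ 0) (c₀ c₁ : ℝ) {F : ℝ → ℝ} (hF : Continuous F)
    (y : ℝ) :
    HasDerivAt (mildSolution μ c₀ c₁ F)
      (exp (μ * y) * (μ * c₀ + c₁ + ∫ ξ in (0:ℝ)..y, exp (-(μ * ξ)) * F ξ) -
        μ * mildSolution μ c₀ c₁ F y) y := by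
  have hFTC : ∀ {φ : ℝ → ℝ}, Continuous φ →
      HasDerivAt (fun t => ∫ ξ in (0:ℝ)..t, φ ξ) (φ y) y := fun hφ =>
    (hφ.integral_hasStrictDerivAt 0 y).hasDerivAt
  have hlin : HasDerivAt (fun t => μ * t) μ y := by simpa using (hasDerivAt_id y).const_mul μ
  have hneg : HasDerivAt (fun t => -(μ * t)) (-μ) y := hlin.neg
  have h := (((hlin.cosh.mul_const c₀).add ((hlin.sinh.div_const μ).mul_const c₁)).add
    ((hlin.exp.div_const (2 * μ)).mul
      (hFTC (by fun_prop : Continuous fun ξ => exp (-(μ * ξ)) * F ξ)))).sub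
    ((hneg.exp.div_const (2 * μ)).mul
      (hFTC (by fun_prop : Continuous fun ξ => exp (μ * ξ) * F ξ)))
  rw [funext (mildSolution_eq_exp c₀ c₁ hF)]
  refine h.congr_deriv ?_
  beta_reduce
  rw [cosh_eq, sinh_eq]
  field_simp
  ring

theorem exp_mul_mul_add_deriv_eq_sub_integral {μ a c₀ c₁ x : ℝ} {F u u' : ℝ → ℝ} (hμ : μ ≠ 0)
    (ha : 0 < a) (hF : Continuous F) (hu : EqOn u (mildSolution μ c₀ c₁ F) (Icc 0 a))
    (hu' : ∀ y ∈ Icc 0 a, HasDerivWithinAt u (u' y) (Icc 0 a) y) (hx : x ∈ Icc 0 a) :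
    exp (μ * (a - x)) * (μ * u x + u' x) =
      μ * u a + u' a - exp (μ * a) * ∫ ξ in x..a, exp (-(μ * ξ)) * F ξ := by
  have hW : ∀ y ∈ Icc 0 a, μ * u y + u' y =
      exp (μ * y) * (μ * c₀ + c₁ + ∫ ξ in (0:ℝ)..y, exp (-(μ * ξ)) * F ξ) := by
    intro y hy
    have hderiv := (uniqueDiffOn_Icc ha y hy).eq_deriv _ (hu' y hy)
      ((hasDerivAt_mildSolution hμ c₀ c₁ hF y).hasDerivWithinAt.congr hu (hu hy))
    rw [hderiv, hu hy]
    ring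
  have hint : ∀ b c : ℝ, IntervalIntegrable (fun ξ => exp (-(μ * ξ)) * F ξ) volume b c :=
    fun _ _ => by apply Continuous.intervalIntegrable; fun_prop
  have hexp : exp (μ * (a - x)) * exp (μ * x) = exp (μ * a) := by
    rw [← exp_add]; ring_nf
  rw [hW x hx, hW a (right_mem_Icc.2 ha.le),
    ← intervalIntegral.integral_interval_sub_left (hint 0 a) (hint 0 x)]
  linear_combination (μ * c₀ + c₁ + ∫ ξ in (0:ℝ)..x, exp (-(μ * ξ)) * F ξ) * hexp

theorem sq_add_sub_le (p q r : ℝ) : (p + q - r) ^ 2 ≤ 3 * p ^ 2 + 3 * q ^ 2 + 3 * r ^ 2 := by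
  nlinarith [sq_nonneg (p - q), sq_nonneg (p + r), sq_nonneg (q + r)]

section CoefficientBound

variable {a lam lam₁ c₀ c₁ x : ℝ} {f u u' : ℝ → ℝ}

theorem mul_exp_mul_sq_add_div_sqrt_le (ha : 0 < a) (hlam₁ : 0 < lam₁) (hlam : lam₁ ≤ lam)
    (hf : ContinuousOn f (Icc 0 a)) (hu : ∀ y, u y = mildSolution (√lam) c₀ c₁ f y)
    (hu' : ∀ y ∈ Icc 0 a, HasDerivWithinAt u (u' y) (Icc 0 a) y) (hx : x ∈ Icc 0 a) :
    lam * exp (2 * √lam * (a - x)) * (u x + u' x / √lam) ^ 2 ≤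
      3 * ((1 + lam) * u a ^ 2) + 3 * u' a ^ 2 +
        3 / 2 * lam₁ ^ (-(1 : ℝ) / 2) * ∫ ξ in Icc 0 a, exp (2 * √lam * a) * f ξ ^ 2 := by
  set μ := √lam
  have hμ : 0 < μ := sqrt_pos.2 (hlam₁.trans_le hlam)
  have hμsq : μ ^ 2 = lam := sq_sqrt (hlam₁.trans_le hlam).le
  set F : ℝ → ℝ := fun t => f (projIcc 0 a ha.le t)
  have hF : Continuous F :=
    hf.comp_continuous continuous_projIcc.subtype_val fun t => (projIcc 0 a ha.le t).2
  have hFf : EqOn F f (Icc 0 a) := fun t ht => by simp only [F, projIcc_of_mem ha.le ht]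
  have huF : EqOn u (mildSolution μ c₀ c₁ F) (Icc 0 a) := fun y hy => by
    rw [hu, mildSolution_eqOn_of_eqOn hFf.symm hy]
  set J := ∫ ξ in x..a, exp (-(μ * ξ)) * F ξ
  have hJ : J ^ 2 ≤ (2 * μ)⁻¹ * ∫ ξ in Icc 0 a, f ξ ^ 2 := by
    refine (sq_intervalIntegral_exp_neg_mul_le hμ hF hx).trans_eq ?_
    congr 1
    exact setIntegral_congr_fun measurableSet_Icc fun ξ hξ => by simp only [hFf hξ]
  have hconst : 3 * (2 * μ)⁻¹ ≤ 3 / 2 * lam₁ ^ (-(1 : ℝ) / 2) := by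
    rw [neg_div, rpow_neg hlam₁.le, ← sqrt_eq_rpow, mul_inv, ← mul_assoc]
    gcongr
    · norm_num
    · exact sqrt_le_sqrt hlam
  have hexp : exp (μ * a) ^ 2 = exp (2 * μ * a) := by
    rw [← exp_nat_mul]; ring_nf
  calc lam * exp (2 * μ * (a - x)) * (u x + u' x / μ) ^ 2
      = (exp (μ * (a - x)) * (μ * u x + u' x)) ^ 2 := by
        rw [← hμsq, show 2 * μ * (a - x) = μ * (a - x) + μ * (a - x) by ring, exp_add]
        field_simp
    _ = (μ * u a + u' a - exp (μ * a) * J) ^ 2 := by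
        rw [exp_mul_mul_add_deriv_eq_sub_integral hμ.ne' ha hF huF hu' hx]
    _ ≤ 3 * (μ * u a) ^ 2 + 3 * u' a ^ 2 + 3 * (exp (μ * a) * J) ^ 2 := sq_add_sub_le _ _ _
    _ ≤ 3 * ((1 + lam) * u a ^ 2) + 3 * u' a ^ 2 +
          3 * (2 * μ)⁻¹ * (exp (2 * μ * a) * ∫ ξ in Icc 0 a, f ξ ^ 2) := by
        rw [mul_pow, hμsq, mul_pow, hexp]
        nlinarith [sq_nonneg (u a), mul_le_mul_of_nonneg_left hJ (exp_pos (2 * μ * a)).le]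
    _ ≤ _ := by
        rw [integral_const_mul]
        gcongr

theorem ofReal_mul_exp_mul_sq_add_div_sqrt_le (ha : 0 < a) (hlam₁ : 0 < lam₁) (hlam : lam₁ ≤ lam)
    (hf : ContinuousOn f (Icc 0 a)) (hu : ∀ y, u y = mildSolution (√lam) c₀ c₁ f y)
    (hu' : ∀ y ∈ Icc 0 a, HasDerivWithinAt u (u' y) (Icc 0 a) y) (hx : x ∈ Icc 0 a) :
    ENNReal.ofReal (lam * exp (2 * √lam * (a - x)) * (u x + u' x / √lam) ^ 2) ≤
      3 * ENNReal.ofReal ((1 + lam) * u a ^ 2) + 3 * ENNReal.ofReal (u' a ^ 2) +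
        (3 / 2 : ℝ≥0∞) * ENNReal.ofReal (lam₁ ^ (-(1 : ℝ) / 2)) *
          ∫⁻ ξ in Icc 0 a, ENNReal.ofReal (exp (2 * √lam * a) * f ξ ^ 2) := by
  have hint : IntegrableOn (fun ξ => exp (2 * √lam * a) * f ξ ^ 2) (Icc 0 a) :=
    (continuousOn_const.mul (hf.pow 2)).integrableOn_Icc
  rw [← ofReal_integral_eq_lintegral_ofReal hint
    (Filter.Eventually.of_forall fun _ => by positivity)]
  refine (ENNReal.ofReal_le_ofReal
    (mul_exp_mul_sq_add_div_sqrt_le ha hlam₁ hlam hf hu hu' hx)).trans_eq ?_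
  have hlam0 : 0 ≤ lam := hlam₁.le.trans hlam
  rw [ENNReal.ofReal_add (by positivity) (by positivity),
    ENNReal.ofReal_add (by positivity) (by positivity),
    ENNReal.ofReal_mul (by norm_num : (0:ℝ) ≤ 3), ENNReal.ofReal_mul (by norm_num : (0:ℝ) ≤ 3),
    ENNReal.ofReal_mul (by positivity : (0:ℝ) ≤ 3 / 2 * lam₁ ^ (-(1 : ℝ) / 2)),
    ENNReal.ofReal_mul (by norm_num : (0:ℝ) ≤ 3 / 2), ENNReal.ofReal_div_of_pos two_pos]
  norm_num

end CoefficientBound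

/-- Regularity bound of Theorem 2.1 in the case `k = 1`, in Fourier-coefficient
form; sums of nonnegative terms are taken in `[0,∞]`. -/
theorem stmt_8 (a : ℝ) (ha : 0 < a)
    (lam : ℕ → ℝ) (lam₁ : ℝ) (hlam₁ : 0 < lam₁) (hlam : ∀ p, lam₁ ≤ lam p)
    (c₀ c₁ : ℕ → ℝ)
    (f : ℕ → ℝ → ℝ) (hf : ∀ p, ContinuousOn (f p) (Icc 0 a))
    (u u' : ℕ → ℝ → ℝ)
    (hu : ∀ p x, u p x =
      Real.cosh (Real.sqrt (lam p) * x) * c₀ p +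
      Real.sinh (Real.sqrt (lam p) * x) / Real.sqrt (lam p) * c₁ p +
      ∫ ξ in (0:ℝ)..x,
        Real.sinh (Real.sqrt (lam p) * (x - ξ)) / Real.sqrt (lam p) * f p ξ)
    (hu' : ∀ p, ∀ x ∈ Icc (0:ℝ) a, HasDerivWithinAt (u p) (u' p x) (Icc 0 a) x) :
    ∀ x ∈ Icc (0:ℝ) a,
      (∑' p : ℕ, ENNReal.ofReal
          (lam p * Real.exp (2 * Real.sqrt (lam p) * (a - x)) *
            (u p x + u' p x / Real.sqrt (lam p)) ^ 2)) ≤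
        3 * (∑' p : ℕ, ENNReal.ofReal ((1 + lam p) * (u p a) ^ 2)) +
        3 * (∑' p : ℕ, ENNReal.ofReal ((u' p a) ^ 2)) +
        (3 / 2 : ℝ≥0∞) * ENNReal.ofReal (lam₁ ^ (-(1 : ℝ) / 2)) *
          ∫⁻ ξ in Icc (0:ℝ) a, ∑' p : ℕ, ENNReal.ofReal
            (Real.exp (2 * Real.sqrt (lam p) * a) * (f p ξ) ^ 2) := by
  intro x hx
  have hmeas : ∀ p, AEMeasurable (fun ξ => ENNReal.ofReal (exp (2 * √(lam p) * a) * f p ξ ^ 2))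
      (volume.restrict (Icc 0 a)) := fun p =>
    ((continuousOn_const.mul ((hf p).pow 2)).aemeasurable measurableSet_Icc).ennreal_ofReal
  rw [lintegral_tsum hmeas, ← ENNReal.tsum_mul_left, ← ENNReal.tsum_mul_left,
    ← ENNReal.tsum_mul_left, ← ENNReal.tsum_add, ← ENNReal.tsum_add]
  exact ENNReal.tsum_le_tsum fun p =>
    ofReal_mul_exp_mul_sq_add_div_sqrt_le ha hlam₁ (hlam p) (hf p) (hu p) (hu' p) hx
end

section
/- Let a > 0, k ≥ 1 a natural number, γ ≥ 1, (λ_p)_{p≥1} a sequence of positive reals, (c₀ₚ), (c₁ₚ) real sequences, and for each p define u_p : [0,a] → ℝ by u_p(x) = cosh(√λ_p x)·c₀ₚ + (sinh(√λ_p x)/√λ_p)·c₁ₚ (zero forcing). Assume Σ_p λ_p^{k/γ}·u_p(a)² < ∞ and Σ_p λ_p^{k/γ−1}·u_p'(a)² < ∞. Then sup_{x∈[0,a]} Σ_{p=1}^∞ λ_pᵏ·e^{2γ√λ_p (a−x)}·| u_p(x) + u_p'(x)/√λ_p |^{2γ} ≤ 2^{2γ−1}·( (Σ_{p=1}^∞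 λ_p^{k/γ}·u_p(a)²)^γ + (Σ_{p=1}^∞ λ_p^{k/γ−1}·u_p'(a)²)^γ ). -/
open MeasureTheory Set
open scoped ENNReal

lemma two_rpow_aux {γ x y : ℝ} (hγ : 1 ≤ γ) (hx : 0 ≤ x) (hy : 0 ≤ y) :
    (x + y) ^ γ ≤ 2 ^ (γ - 1) * (x ^ γ + y ^ γ) := by
  have h := NNReal.rpow_add_le_mul_rpow_add_rpow x.toNNReal y.toNNReal hγ
  rw [← NNReal.coe_le_coe] at h
  push_cast at h
  rwa [Real.coe_toNNReal x hx, Real.coe_toNNReal y hy] at h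

/-- Explicit-constant form of the bound (2.10) from the Remark for the modified
Gevrey-type criterion `A^γ` with zero forcing. -/
theorem stmt_10 (a : ℝ) (ha : 0 < a) (k : ℕ) (hk : 1 ≤ k) (γ : ℝ) (hγ : 1 ≤ γ)
    (lam : ℕ → ℝ) (hlam : ∀ p, 0 < lam p) (c₀ c₁ : ℕ → ℝ)
    (u : ℕ → ℝ → ℝ)
    (hu : ∀ p x, u p x =
      Real.cosh (Real.sqrt (lam p) * x) * c₀ p +
      Real.sinh (Real.sqrt (lam p) * x) / Real.sqrt (lam p) * c₁ p)
    (hsum₀ : Summable fun p => lam p ^ ((k : ℝ) / γ) * (u p a) ^ 2)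
    (hsum₁ : Summable fun p => lam p ^ ((k : ℝ) / γ - 1) * (deriv (u p) a) ^ 2) :
    (⨆ x ∈ Icc (0:ℝ) a, ∑' p : ℕ, ENNReal.ofReal
        (lam p ^ k * Real.exp (2 * γ * Real.sqrt (lam p) * (a - x)) *
          |u p x + deriv (u p) x / Real.sqrt (lam p)| ^ (2 * γ))) ≤
      ENNReal.ofReal ((2 : ℝ) ^ (2 * γ - 1) *
        ((∑' p : ℕ, lam p ^ ((k : ℝ) / γ) * (u p a) ^ 2) ^ γ +
         (∑' p : ℕ, lam p ^ ((k : ℝ) / γ - 1) * (deriv (u p) a) ^ 2) ^ γ)) := by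
  have hγ0 : (0:ℝ) < γ := lt_of_lt_of_le one_pos hγ
  have hspos : ∀ p, 0 < Real.sqrt (lam p) := fun p => Real.sqrt_pos.mpr (hlam p)
  have hufun : ∀ p, u p = fun x => Real.cosh (Real.sqrt (lam p) * x) * c₀ p +
      Real.sinh (Real.sqrt (lam p) * x) / Real.sqrt (lam p) * c₁ p := fun p => funext (hu p)
  -- derivative
  have hderiv : ∀ p x, deriv (u p) x =
      Real.sqrt (lam p) * Real.sinh (Real.sqrt (lam p) * x) * c₀ p +
      Real.cosh (Real.sqrt (lam p) * x) * c₁ p := by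
    intro p x
    have h1 : HasDerivAt (fun y : ℝ => Real.sqrt (lam p) * y) (Real.sqrt (lam p)) x := by
      simpa using (hasDerivAt_id x).const_mul (Real.sqrt (lam p))
    have hcosh : HasDerivAt (fun y => Real.cosh (Real.sqrt (lam p) * y))
        (Real.sinh (Real.sqrt (lam p) * x) * Real.sqrt (lam p)) x :=
      (Real.hasDerivAt_cosh (Real.sqrt (lam p) * x)).comp x h1
    have hsinh : HasDerivAt (fun y => Real.sinh (Real.sqrt (lam p) * y))
        (Real.cosh (Real.sqrt (lam p) * x) * Real.sqrt (lam p)) x :=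
      (Real.hasDerivAt_sinh (Real.sqrt (lam p) * x)).comp x h1
    have hud : HasDerivAt (u p)
        (Real.sinh (Real.sqrt (lam p) * x) * Real.sqrt (lam p) * c₀ p +
          Real.cosh (Real.sqrt (lam p) * x) * Real.sqrt (lam p) / Real.sqrt (lam p) * c₁ p) x := by
      rw [hufun p]
      exact (hcosh.mul_const (c₀ p)).add ((hsinh.div_const (Real.sqrt (lam p))).mul_const (c₁ p))
    rw [hud.deriv, mul_div_assoc, div_self (hspos p).ne', mul_one]
    ring
  -- key identity
  have hkey : ∀ p x, u p x + deriv (u p) x / Real.sqrt (lam p) =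
      Real.exp (Real.sqrt (lam p) * x) * (c₀ p + c₁ p / Real.sqrt (lam p)) := by
    intro p x
    have h := Real.cosh_add_sinh (Real.sqrt (lam p) * x)
    rw [hu, hderiv]
    have hs := (hspos p).ne'
    field_simp
    linear_combination (Real.sqrt (lam p) * c₀ p + c₁ p) * h
  -- the summand is independent of x
  have hxind : ∀ p x, lam p ^ k * Real.exp (2 * γ * Real.sqrt (lam p) * (a - x)) *
      |u p x + deriv (u p) x / Real.sqrt (lam p)| ^ (2 * γ) =
      lam p ^ k * |u p a + deriv (u p) a / Real.sqrt (lam p)| ^ (2 * γ) := by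
    intro p x
    rw [hkey p x, hkey p a]
    rw [abs_mul, abs_mul, abs_of_pos (Real.exp_pos _), abs_of_pos (Real.exp_pos _)]
    rw [Real.mul_rpow (Real.exp_pos _).le (abs_nonneg _),
        Real.mul_rpow (Real.exp_pos _).le (abs_nonneg _),
        ← Real.exp_mul, ← Real.exp_mul]
    rw [show lam p ^ k * Real.exp (2 * γ * Real.sqrt (lam p) * (a - x)) *
        (Real.exp (Real.sqrt (lam p) * x * (2 * γ)) * |c₀ p + c₁ p / Real.sqrt (lam p)| ^ (2*γ)) =
        lam p ^ k * (Real.exp (2 * γ * Real.sqrt (lam p) * (a - x)) *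
        Real.exp (Real.sqrt (lam p) * x * (2 * γ))) * |c₀ p + c₁ p / Real.sqrt (lam p)| ^ (2*γ)
        by ring, ← Real.exp_add,
      show 2 * γ * Real.sqrt (lam p) * (a - x) + Real.sqrt (lam p) * x * (2 * γ) =
        Real.sqrt (lam p) * a * (2 * γ) by ring]
    ring
  -- per-mode bound
  set b : ℕ → ℝ := fun p =>
    lam p ^ ((k : ℝ) / γ) * (u p a) ^ 2 + lam p ^ ((k : ℝ) / γ - 1) * (deriv (u p) a) ^ 2 with hbdef
  have hb0 : ∀ p, 0 ≤ b p := by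
    intro p
    have h1 : (0:ℝ) ≤ lam p ^ ((k : ℝ) / γ) := (Real.rpow_pos_of_pos (hlam p) _).le
    have h2 : (0:ℝ) ≤ lam p ^ ((k : ℝ) / γ - 1) := (Real.rpow_pos_of_pos (hlam p) _).le
    positivity
  have hgb : ∀ p, lam p ^ k * |u p a + deriv (u p) a / Real.sqrt (lam p)| ^ (2 * γ) ≤
      2 ^ γ * b p ^ γ := by
    intro p
    set v := u p a with hv
    set w := deriv (u p) a with hw
    have hlp := hlam p
    have hs := hspos p
    have h1 : lam p ^ k = (lam p ^ ((k : ℝ) / γ)) ^ γ := by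
      rw [← Real.rpow_natCast (lam p) k, ← Real.rpow_mul hlp.le]
      congr 1
      field_simp
    have h2 : |v + w / Real.sqrt (lam p)| ^ (2 * γ) = ((v + w / Real.sqrt (lam p)) ^ 2) ^ γ := by
      rw [Real.rpow_mul (abs_nonneg _), Real.rpow_two, sq_abs]
    rw [h1, h2, ← Real.mul_rpow (Real.rpow_pos_of_pos hlp _).le (sq_nonneg _)]
    have hwsq : (w / Real.sqrt (lam p)) ^ 2 = w ^ 2 / lam p := by
      rw [div_pow, Real.sq_sqrt hlp.le]
    have hmid : lam p ^ ((k : ℝ) / γ) * (v + w / Real.sqrt (lam p)) ^ 2 ≤ 2 * b p := by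
      have hsq : (v + w / Real.sqrt (lam p)) ^ 2 ≤ 2 * v ^ 2 + 2 * (w / Real.sqrt (lam p)) ^ 2 := by
        nlinarith [sq_nonneg (v - w / Real.sqrt (lam p))]
      have hA : lam p ^ ((k : ℝ) / γ) * (v + w / Real.sqrt (lam p)) ^ 2 ≤
          lam p ^ ((k : ℝ) / γ) * (2 * v ^ 2 + 2 * (w / Real.sqrt (lam p)) ^ 2) :=
        mul_le_mul_of_nonneg_left hsq (Real.rpow_pos_of_pos hlp _).le
      have hB : lam p ^ ((k : ℝ) / γ) * (w ^ 2 / lam p) = lam p ^ ((k : ℝ) / γ - 1) * w ^ 2 := by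
        rw [Real.rpow_sub hlp, Real.rpow_one]
        field_simp
      calc lam p ^ ((k : ℝ) / γ) * (v + w / Real.sqrt (lam p)) ^ 2 ≤
          lam p ^ ((k : ℝ) / γ) * (2 * v ^ 2 + 2 * (w / Real.sqrt (lam p)) ^ 2) := hA
        _ = 2 * (lam p ^ ((k : ℝ) / γ) * v ^ 2) + 2 * (lam p ^ ((k : ℝ) / γ) * (w ^ 2 / lam p)) := by
            rw [hwsq]; ring
        _ = 2 * b p := by rw [hB, hbdef]; ring
    calc (lam p ^ ((k : ℝ) / γ) * (v + w / Real.sqrt (lam p)) ^ 2) ^ γ ≤ (2 * b p) ^ γ :=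
        Real.rpow_le_rpow (by positivity) hmid hγ0.le
      _ = 2 ^ γ * b p ^ γ := Real.mul_rpow (by norm_num) (hb0 p)
  -- summability and sum bounds
  have hbsum : Summable b := hsum₀.add hsum₁
  set S : ℝ := ∑' p, b p with hSdef
  have hS0 : (0:ℝ) ≤ S := tsum_nonneg hb0
  have hle : ∀ p, b p ^ γ ≤ S ^ (γ - 1) * b p := by
    intro p
    have hbS : b p ≤ S := Summable.le_tsum hbsum p fun j _ => hb0 j
    calc b p ^ γ = b p ^ (γ - 1) * b p := by
          have hγsplit : γ = (γ - 1) + 1 := by ring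
          nth_rewrite 1 [hγsplit]
          rw [Real.rpow_add_of_nonneg (hb0 p) (by linarith) zero_le_one, Real.rpow_one]
      _ ≤ S ^ (γ - 1) * b p :=
        mul_le_mul_of_nonneg_right (Real.rpow_le_rpow (hb0 p) hbS (by linarith)) (hb0 p)
  have hsumbγ : Summable fun p => b p ^ γ :=
    Summable.of_nonneg_of_le (fun p => Real.rpow_nonneg (hb0 p) γ) hle (hbsum.mul_left _)
  have htsum_bγ : (∑' p, b p ^ γ) ≤ S ^ γ := by
    calc (∑' p, b p ^ γ) ≤ ∑' p, S ^ (γ - 1) * b p :=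
        Summable.tsum_le_tsum hle hsumbγ (hbsum.mul_left _)
      _ = S ^ (γ - 1) * S := by rw [tsum_mul_left]
      _ ≤ S ^ γ := by
          rcases eq_or_lt_of_le hS0 with h | h
          · simp [← h, Real.zero_rpow hγ0.ne']
          · rw [show S ^ (γ - 1) * S = S ^ (γ - 1) * S ^ (1:ℝ) by rw [Real.rpow_one],
              ← Real.rpow_add h]
            norm_num
  -- sums S₀ S₁
  set S₀ : ℝ := ∑' p : ℕ, lam p ^ ((k : ℝ) / γ) * (u p a) ^ 2 with hS₀def
  set S₁ : ℝ := ∑' p : ℕ, lam p ^ ((k : ℝ) / γ - 1) * (deriv (u p) a) ^ 2 with hS₁def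
  have hS₀0 : 0 ≤ S₀ := tsum_nonneg fun p => mul_nonneg (Real.rpow_pos_of_pos (hlam p) _).le (sq_nonneg _)
  have hS₁0 : 0 ≤ S₁ := tsum_nonneg fun p => mul_nonneg (Real.rpow_pos_of_pos (hlam p) _).le (sq_nonneg _)
  have hSeq : S = S₀ + S₁ := Summable.tsum_add hsum₀ hsum₁
  have hfinal : (∑' p, 2 ^ γ * b p ^ γ) ≤ 2 ^ (2 * γ - 1) * (S₀ ^ γ + S₁ ^ γ) := by
    have h2γ : (0:ℝ) ≤ 2 ^ γ := by positivity
    calc (∑' p, 2 ^ γ * b p ^ γ) = 2 ^ γ * ∑' p, b p ^ γ := tsum_mul_left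
      _ ≤ 2 ^ γ * S ^ γ := mul_le_mul_of_nonneg_left htsum_bγ h2γ
      _ = 2 ^ γ * (S₀ + S₁) ^ γ := by rw [hSeq]
      _ ≤ 2 ^ γ * (2 ^ (γ - 1) * (S₀ ^ γ + S₁ ^ γ)) :=
          mul_le_mul_of_nonneg_left (two_rpow_aux hγ hS₀0 hS₁0) h2γ
      _ = 2 ^ (2 * γ - 1) * (S₀ ^ γ + S₁ ^ γ) := by
          rw [← mul_assoc, ← Real.rpow_add two_pos,
            show γ + (γ - 1) = 2 * γ - 1 by ring]
  -- assemble in ℝ≥0∞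
  refine iSup₂_le fun x hx => ?_
  calc (∑' p : ℕ, ENNReal.ofReal
        (lam p ^ k * Real.exp (2 * γ * Real.sqrt (lam p) * (a - x)) *
          |u p x + deriv (u p) x / Real.sqrt (lam p)| ^ (2 * γ)))
      = ∑' p : ℕ, ENNReal.ofReal
        (lam p ^ k * |u p a + deriv (u p) a / Real.sqrt (lam p)| ^ (2 * γ)) :=
        tsum_congr fun p => by rw [hxind p x]
    _ ≤ ∑' p : ℕ, ENNReal.ofReal (2 ^ γ * b p ^ γ) :=
        ENNReal.tsum_le_tsum fun p => ENNReal.ofReal_le_ofReal (hgb p)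
    _ = ENNReal.ofReal (∑' p, 2 ^ γ * b p ^ γ) :=
        (ENNReal.ofReal_tsum_of_nonneg (fun p => mul_nonneg (Real.rpow_nonneg (by norm_num) _) (Real.rpow_nonneg (hb0 p) _)) (hsumbγ.mul_left _)).symm
    _ ≤ ENNReal.ofReal ((2 : ℝ) ^ (2 * γ - 1) * (S₀ ^ γ + S₁ ^ γ)) :=
        ENNReal.ofReal_le_ofReal hfinal
end
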